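/- arXiv:2507.16349 — 2 statements merged into one kernel-verified Lean document; each statement's English description precedes it below -/
import Mathlib

section
/- Let A be a bounded self-adjoint positive definite operator on a real Hilbert space H, defining the inner product a(v, w) = ⟨Av, w⟩. For φ with ‖φ‖ = 1 and the gradient of a functional E at φ represented by r ∈ H (i.e., DE(φ)[v] = ⟨r, v⟩ for all v), the unique vector g ∈ T_φS = {v : ⟨φ, v⟩ = 0} satisfying a(g, v) = ⟨r, v⟩ for all v ∈ T_φS is g = A⁻¹r − (⟨A⁻¹r, φ⟩/⟨A⁻¹φ, φ⟩) A⁻¹φ. -/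
open scoped RealInnerProductSpace

/-!
The candidate `g` is `A⁻¹r` corrected along `A⁻¹φ` so that it becomes tangent, and `A g = r - t φ`
pairs with tangent vectors exactly as `r` does. Two solutions differ by a tangent vector `d` with
`⟪A d, d⟫ = 0`, so `d = 0` by positivity of `A`.
-/

section

variable {H F : Type*} [NormedAddCommGroup H] [InnerProductSpace ℝ H] [FunLike F H H]

def IsTangentGradient (A : F) (φ r g : H) : Prop :=
  ⟪φ, g⟫ = 0 ∧ ∀ v : H, ⟪φ, v⟫ = 0 → ⟪A g, v⟫ = ⟪r, v⟫

noncomputable def riemannianGradient (Ainv : F) (φ r : H) : H :=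
  Ainv r - (⟪Ainv r, φ⟫ / ⟪Ainv φ, φ⟫) • Ainv φ

theorem eq_zero_of_inner_map_self_eq_zero {A : F} (hpos : ∃ c > 0, ∀ v : H, c * ‖v‖ ^ 2 ≤ ⟪A v, v⟫)
    {v : H} (hv : ⟪A v, v⟫ = 0) : v = 0 := by
  obtain ⟨c, hc, hcA⟩ := hpos
  have hle : c * ‖v‖ ^ 2 ≤ 0 := hv ▸ hcA v
  have : ‖v‖ ^ 2 = 0 := le_antisymm (nonpos_of_mul_nonpos_right hle hc) (sq_nonneg _)
  simpa using this

variable [LinearMapClass F ℝ H H] {A Ainv : F} (hA : ∀ v : H, ⟪A v, v⟫ = 0 → v = 0)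
  (hAAinv : ∀ x, A (Ainv x) = x)
include hA hAAinv

theorem inner_inv_self_ne_zero {φ : H} (hφ : φ ≠ 0) : ⟪Ainv φ, φ⟫ ≠ 0 := by
  intro h
  have hzero : Ainv φ = 0 := hA _ (by rw [hAAinv, real_inner_comm, h])
  exact hφ (by rw [← hAAinv φ, hzero, map_zero])

theorem inner_riemannianGradient (φ r : H) : ⟪φ, riemannianGradient Ainv φ r⟫ = 0 := by
  rcases eq_or_ne φ 0 with rfl | hφ
  · exact inner_zero_left _
  have hd := inner_inv_self_ne_zero hA hAAinv hφ
  rw [riemannianGradient, inner_sub_right, real_inner_smul_right, real_inner_comm (Ainv r),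
    real_inner_comm (Ainv φ), div_mul_cancel₀ _ hd, sub_self]

omit hA in
theorem map_riemannianGradient (φ r : H) :
    A (riemannianGradient Ainv φ r) = r - (⟪Ainv r, φ⟫ / ⟪Ainv φ, φ⟫) • φ := by
  rw [riemannianGradient, map_sub, map_smul, hAAinv, hAAinv]

theorem isTangentGradient_riemannianGradient (φ r : H) :
    IsTangentGradient A φ r (riemannianGradient Ainv φ r) := by
  refine ⟨inner_riemannianGradient hA hAAinv φ r, fun v hv => ?_⟩
  rw [map_riemannianGradient hAAinv, inner_sub_left, real_inner_smul_left, hv, mul_zero, sub_zero]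

omit hAAinv in
theorem IsTangentGradient.unique {φ r g₁ g₂ : H} (h₁ : IsTangentGradient A φ r g₁)
    (h₂ : IsTangentGradient A φ r g₂) : g₁ = g₂ := by
  have htan : ⟪φ, g₁ - g₂⟫ = 0 := by rw [inner_sub_right, h₁.1, h₂.1, sub_self]
  refine sub_eq_zero.mp (hA _ ?_)
  rw [map_sub, inner_sub_left, h₁.2 _ htan, h₂.2 _ htan, sub_self]

end

theorem riemannian_gradient_formula_general
    {H : Type*} [NormedAddCommGroup H] [InnerProductSpace ℝ H]
    (A Ainv : H →L[ℝ] H)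
    (hpos : ∃ c > 0, ∀ v : H, c * ‖v‖ ^ 2 ≤ ⟪A v, v⟫)
    (hAAinv : ∀ x, A (Ainv x) = x)
    (φ : H) (r : H) :
    (⟪φ, Ainv r - (⟪Ainv r, φ⟫ / ⟪Ainv φ, φ⟫) • Ainv φ⟫ = 0 ∧
      ∀ v : H, ⟪φ, v⟫ = 0 →
        ⟪A (Ainv r - (⟪Ainv r, φ⟫ / ⟪Ainv φ, φ⟫) • Ainv φ), v⟫ = ⟪r, v⟫) ∧
    ∀ g : H, (⟪φ, g⟫ = 0 ∧ ∀ v : H, ⟪φ, v⟫ = 0 → ⟪A g, v⟫ = ⟪r, v⟫) →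
      g = Ainv r - (⟪Ainv r, φ⟫ / ⟪Ainv φ, φ⟫) • Ainv φ := by
  have hA : ∀ v : H, ⟪A v, v⟫ = 0 → v = 0 := fun _ => eq_zero_of_inner_map_self_eq_zero hpos
  have hg : IsTangentGradient A φ r (riemannianGradient Ainv φ r) :=
    isTangentGradient_riemannianGradient hA hAAinv φ r
  exact ⟨hg, fun g hg' => IsTangentGradient.unique hA hg' hg⟩

/-- Formula for the Riemannian gradient with respect to the metric `a(v, w) = ⟨Av, w⟩` on the
unit sphere: for a unit vector `φ` and a gradient representative `r` of a functional (i.e.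
`DE(φ)[v] = ⟨r, v⟩`), the unique `g` with `⟨φ, g⟩ = 0` and `a(g, v) = ⟨r, v⟩` for all tangent
`v` is `g = A⁻¹r − (⟨A⁻¹r, φ⟩/⟨A⁻¹φ, φ⟩) A⁻¹φ`. -/
theorem riemannian_gradient_formula
    {H : Type*} [NormedAddCommGroup H] [InnerProductSpace ℝ H] [CompleteSpace H]
    (A Ainv : H →L[ℝ] H)
    (hsa : ∀ x y : H, ⟪A x, y⟫ = ⟪x, A y⟫)
    (hpos : ∃ c > 0, ∀ v : H, c * ‖v‖ ^ 2 ≤ ⟪A v, v⟫)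
    (hAAinv : ∀ x, A (Ainv x) = x) (hAinvA : ∀ x, Ainv (A x) = x)
    (φ : H) (hφ : ‖φ‖ = 1) (E : H → ℝ) (E' : H →L[ℝ] ℝ) (r : H)
    (hE : HasFDerivAt E E' φ) (hr : ∀ v : H, E' v = ⟪r, v⟫) :
    (⟪φ, Ainv r - (⟪Ainv r, φ⟫ / ⟪Ainv φ, φ⟫) • Ainv φ⟫ = 0 ∧
      ∀ v : H, ⟪φ, v⟫ = 0 →
        ⟪A (Ainv r - (⟪Ainv r, φ⟫ / ⟪Ainv φ, φ⟫) • Ainv φ), v⟫ = ⟪r, v⟫) ∧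
    ∀ g : H, (⟪φ, g⟫ = 0 ∧ ∀ v : H, ⟪φ, v⟫ = 0 → ⟪A g, v⟫ = ⟪r, v⟫) →
      g = Ainv r - (⟪Ainv r, φ⟫ / ⟪Ainv φ, φ⟫) • Ainv φ :=
  riemannian_gradient_formula_general A Ainv hpos hAAinv φ r
end

section
/- In the setting of the previous lemma with r = Aφ: the energy-adaptive gradient g = φ − A⁻¹φ/⟨A⁻¹φ, φ⟩ satisfies a(g, g) = ⟨Aφ, φ⟩ − 1/⟨A⁻¹φ, φ⟩, and this quantity is nonnegative, with equality zero iff φ is an eigenvector of A. -/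
open scoped RealInnerProductSpace

/-!
With `v = A⁻¹φ` and `t = ⟨v, φ⟩`, self-adjointness gives `⟨Aφ, v⟩ = ⟨φ, φ⟩ = 1`, so expanding
`a(φ - t⁻¹ v, φ - t⁻¹ v)` yields `⟨Aφ, φ⟩ - 2/t + 1/t`. Coercivity makes this nonnegative and
forces `φ = t⁻¹ v` when it vanishes, i.e. `Aφ = t⁻¹ φ`. Conversely, if `Aφ = λφ` then
`λ t = ⟨v, Aφ⟩ = ⟨Av, φ⟩ = 1`, so both terms equal `λ`.
-/

section

variable {H : Type*} [NormedAddCommGroup H] [InnerProductSpace ℝ H] {A : H →L[ℝ] H}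

lemma inner_map_self_nonneg_of_coercive (hpos : ∃ c > 0, ∀ v : H, c * ‖v‖ ^ 2 ≤ ⟪A v, v⟫)
    (x : H) : 0 ≤ ⟪A x, x⟫ := by
  obtain ⟨c, hc, hcoer⟩ := hpos
  exact le_trans (by positivity) (hcoer x)

lemma eq_zero_of_inner_map_self_eq_zero_of_coercive
    (hpos : ∃ c > 0, ∀ v : H, c * ‖v‖ ^ 2 ≤ ⟪A v, v⟫) {x : H} (hx : ⟪A x, x⟫ = 0) : x = 0 := by
  obtain ⟨c, hc, hcoer⟩ := hpos
  have hnorm_sq : ‖x‖ ^ 2 ≤ 0 := nonpos_of_mul_nonpos_right (hx ▸ hcoer x) hc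
  simpa using hnorm_sq

lemma inner_map_sub_inv_smul_preimage (hsa : ∀ x y : H, ⟪A x, y⟫ = ⟪x, A y⟫) {φ v : H}
    (hv : A v = φ) (hφ : ⟪φ, φ⟫ = 1) :
    ⟪A (φ - ⟪v, φ⟫⁻¹ • v), φ - ⟪v, φ⟫⁻¹ • v⟫ = ⟪A φ, φ⟫ - 1 / ⟪v, φ⟫ := by
  have hφv : ⟪A φ, v⟫ = 1 := by rw [hsa, hv, hφ]
  have hvφ : ⟪A v, φ⟫ = 1 := by rw [hv, hφ]
  have hvv : ⟪A v, v⟫ = ⟪v, φ⟫ := by rw [hv, real_inner_comm]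
  have hinv : ⟪v, φ⟫ * ⟪v, φ⟫⁻¹ ^ 2 = ⟪v, φ⟫⁻¹ := by
    rw [sq, ← mul_assoc]
    simpa using inv_mul_mul_self ⟪v, φ⟫⁻¹
  simp only [map_sub, map_smul, inner_sub_left, inner_sub_right, real_inner_smul_left,
    real_inner_smul_right, hφv, hvφ, hvv]
  linear_combination hinv

lemma inner_map_self_eq_one_div_of_eigenvector (hsa : ∀ x y : H, ⟪A x, y⟫ = ⟪x, A y⟫)
    {φ v : H} (hv : A v = φ) (hφ : ⟪φ, φ⟫ = 1) {lam : ℝ} (hlam : A φ = lam • φ) :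
    ⟪A φ, φ⟫ = 1 / ⟪v, φ⟫ := by
  have hprod : lam * ⟪v, φ⟫ = 1 := by
    rw [← real_inner_smul_right, ← hlam, ← hsa, hv, hφ]
  rw [hlam, real_inner_smul_left, hφ, mul_one, eq_one_div_of_mul_eq_one_left hprod]

end

theorem energy_adaptive_gradient_norm_sq_general
    {H : Type*} [NormedAddCommGroup H] [InnerProductSpace ℝ H]
    (A Ainv : H →L[ℝ] H)
    (hsa : ∀ x y : H, ⟪A x, y⟫ = ⟪x, A y⟫)
    (hpos : ∃ c > 0, ∀ v : H, c * ‖v‖ ^ 2 ≤ ⟪A v, v⟫)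
    (hAAinv : ∀ x, A (Ainv x) = x)
    (φ : H) (hφ : ‖φ‖ = 1) :
    ⟪A (φ - (⟪Ainv φ, φ⟫)⁻¹ • Ainv φ), φ - (⟪Ainv φ, φ⟫)⁻¹ • Ainv φ⟫
        = ⟪A φ, φ⟫ - 1 / ⟪Ainv φ, φ⟫ ∧
    0 ≤ ⟪A φ, φ⟫ - 1 / ⟪Ainv φ, φ⟫ ∧
    (⟪A φ, φ⟫ - 1 / ⟪Ainv φ, φ⟫ = 0 ↔ ∃ lam : ℝ, A φ = lam • φ) := by
  have hφφ : ⟪φ, φ⟫ = 1 := by rw [real_inner_self_eq_norm_sq, hφ, one_pow]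
  have henergy := inner_map_sub_inv_smul_preimage hsa (hAAinv φ) hφφ
  refine ⟨henergy, henergy ▸ inner_map_self_nonneg_of_coercive hpos _,
    fun hzero => ⟨⟪Ainv φ, φ⟫⁻¹, ?_⟩, fun ⟨lam, hlam⟩ => ?_⟩
  · have hφ_eq : φ = ⟪Ainv φ, φ⟫⁻¹ • Ainv φ :=
      sub_eq_zero.mp (eq_zero_of_inner_map_self_eq_zero_of_coercive hpos (henergy.trans hzero))
    calc A φ = ⟪Ainv φ, φ⟫⁻¹ • A (Ainv φ) := by rw [← map_smul, ← hφ_eq]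
      _ = ⟪Ainv φ, φ⟫⁻¹ • φ := by rw [hAAinv]
  · rw [inner_map_self_eq_one_div_of_eigenvector hsa (hAAinv φ) hφφ hlam, sub_self]

/-- For the energy-adaptive gradient `g = φ − A⁻¹φ/⟨A⁻¹φ, φ⟩` of a unit vector `φ`, one has
`a(g, g) = ⟨Aφ, φ⟩ − 1/⟨A⁻¹φ, φ⟩ ≥ 0`, with equality iff `φ` is an eigenvector of `A`. -/
theorem energy_adaptive_gradient_norm_sq
    {H : Type*} [NormedAddCommGroup H] [InnerProductSpace ℝ H] [CompleteSpace H]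
    (A Ainv : H →L[ℝ] H)
    (hsa : ∀ x y : H, ⟪A x, y⟫ = ⟪x, A y⟫)
    (hpos : ∃ c > 0, ∀ v : H, c * ‖v‖ ^ 2 ≤ ⟪A v, v⟫)
    (hAAinv : ∀ x, A (Ainv x) = x) (hAinvA : ∀ x, Ainv (A x) = x)
    (φ : H) (hφ : ‖φ‖ = 1) :
    ⟪A (φ - (⟪Ainv φ, φ⟫)⁻¹ • Ainv φ), φ - (⟪Ainv φ, φ⟫)⁻¹ • Ainv φ⟫
        = ⟪A φ, φ⟫ - 1 / ⟪Ainv φ, φ⟫ ∧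
    0 ≤ ⟪A φ, φ⟫ - 1 / ⟪Ainv φ, φ⟫ ∧
    (⟪A φ, φ⟫ - 1 / ⟪Ainv φ, φ⟫ = 0 ↔ ∃ lam : ℝ, A φ = lam • φ) :=
  energy_adaptive_gradient_norm_sq_general A Ainv hsa hpos hAAinv φ hφ
end
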